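/- Let X and Y be real Hilbert spaces, u ∈ X, R₀ > 0, and let F : X → Y be Fréchet differentiable on B(u,R₀) with derivative DF Lipschitz on B(u,R₀) with constant L > 0. Assume F(u) = 0 and that DF(u) is a continuous linear isomorphism of X onto Y with continuous inverse DF(u)⁻¹. Then for every û ∈ X with ‖û − u‖ < min(R₀, 2‖DF(u)‖ / L, 1 / (L‖DF(u)⁻¹‖)), the two-sided error estimate (1/2)‖DF(u)‖⁻¹ ‖F(û)‖ ≤ ‖u − û‖ ≤ 2‖DF(u)⁻¹‖ ‖F(û)‖ holds, where the norms on X and Y are the Hilbert space norms and operator norms are the usual operator norms. -/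

import Mathlib

/-!
Integrating the Lipschitz bound on `DF` along the segment from `u` to `û` gives the sharp Taylor
estimate `‖F û - DF u (û - u)‖ ≤ L / 2 * ‖û - u‖ ^ 2`. The smallness conditions on `‖û - u‖` make
this quadratic remainder at most the linear term `‖DF u‖ * ‖û - u‖` (lower bound), resp. at most
half of `‖û - u‖` after applying `DF u⁻¹` (upper bound), which produces the factors `2`.
-/

open Set

/-- Comparison with `t ↦ C / 2 * t ^ 2`, which has the same value at `0` and derivative `C * t`. -/
theorem norm_image_le_half_mul_sq_of_norm_deriv_le_mul {F : Type*} [NormedAddCommGroup F]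
    [NormedSpace ℝ F] {g g' : ℝ → F} {C b : ℝ} (hg0 : g 0 = 0)
    (hg : ∀ t ∈ Icc 0 b, HasDerivAt g (g' t) t) (hg' : ∀ t ∈ Icc 0 b, ‖g' t‖ ≤ C * t)
    (hb : 0 ≤ b) : ‖g b‖ ≤ C / 2 * b ^ 2 := by
  have hB : ∀ t, HasDerivAt (fun t : ℝ => C / 2 * t ^ 2) (C * t) t := fun t =>
    ((hasDerivAt_pow 2 t).const_mul (C / 2)).congr_deriv (by push_cast; ring)
  refine image_norm_le_of_norm_deriv_right_le_deriv_boundary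
    (fun t ht => (hg t ht).continuousAt.continuousWithinAt)
    (fun t ht => (hg t (Ico_subset_Icc_self ht)).hasDerivWithinAt)
    (by simp [hg0]) hB (fun t ht => hg' t (Ico_subset_Icc_self ht)) (right_mem_Icc.2 hb)

theorem Convex.norm_image_sub_sub_fderiv_le_of_lipschitz {E F : Type*} [NormedAddCommGroup E]
    [NormedSpace ℝ E] [NormedAddCommGroup F] [NormedSpace ℝ F] {s : Set E} (hs : Convex ℝ s)
    {f : E → F} {f' : E → E →L[ℝ] F} {L : ℝ} {x y : E}
    (hf : ∀ z ∈ s, HasFDerivAt f (f' z) z) (hlip : ∀ z ∈ s, ‖f' z - f' x‖ ≤ L * ‖z - x‖)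
    (hx : x ∈ s) (hy : y ∈ s) :
    ‖f y - f x - f' x (y - x)‖ ≤ L / 2 * ‖y - x‖ ^ 2 := by
  set v := y - x
  have hseg : ∀ t ∈ Icc (0 : ℝ) 1, x + t • v ∈ s := fun t ht => hs.add_smul_sub_mem hx hy ht
  have hderiv : ∀ t ∈ Icc (0 : ℝ) 1, HasDerivAt (fun t : ℝ => f (x + t • v) - f x - t • f' x v)
      (f' (x + t • v) v - f' x v) t := fun t ht => by
    have hline : HasDerivAt (fun t : ℝ => x + t • v) v t := by
      simpa using ((hasDerivAt_id t).smul_const v).const_add x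
    exact (((hf _ (hseg t ht)).comp_hasDerivAt t hline).sub_const (f x)).sub
      ((hasDerivAt_id' t).smul_const (f' x v) |>.congr_deriv (one_smul _ _))
  have hbound : ∀ t ∈ Icc (0 : ℝ) 1, ‖f' (x + t • v) v - f' x v‖ ≤ L * ‖v‖ ^ 2 * t :=
    fun t ht => calc
      ‖f' (x + t • v) v - f' x v‖ ≤ ‖f' (x + t • v) - f' x‖ * ‖v‖ :=
        (f' (x + t • v) - f' x).le_opNorm v
      _ ≤ L * ‖x + t • v - x‖ * ‖v‖ := by gcongr; exact hlip _ (hseg t ht)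
      _ = L * ‖v‖ ^ 2 * t := by
        rw [add_sub_cancel_left, norm_smul, Real.norm_of_nonneg ht.1]; ring
  have := norm_image_le_half_mul_sq_of_norm_deriv_le_mul (by simp) hderiv hbound zero_le_one
  rwa [one_smul, one_smul, add_sub_cancel, one_pow, mul_one, mul_div_right_comm] at this

section PerturbedLinear

variable {𝕜 E F : Type*} [NontriviallyNormedField 𝕜] [NormedAddCommGroup E] [NormedSpace 𝕜 E]
  [NormedAddCommGroup F] [NormedSpace 𝕜 F] {v : E} {y : F} {L : ℝ}

theorem ContinuousLinearMap.half_mul_inv_norm_mul_norm_le_of_norm_sub_le {A : E →L[𝕜] F}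
    (hy : ‖y - A v‖ ≤ L / 2 * ‖v‖ ^ 2) (hv : L * ‖v‖ ≤ 2 * ‖A‖) :
    1 / 2 * ‖A‖⁻¹ * ‖y‖ ≤ ‖v‖ := by
  have hy' : ‖y‖ ≤ ‖A‖ * (2 * ‖v‖) := calc
    ‖y‖ ≤ ‖A v‖ + ‖y - A v‖ := norm_le_insert' _ _
    _ ≤ ‖A‖ * ‖v‖ + L / 2 * ‖v‖ ^ 2 := add_le_add (A.le_opNorm v) hy
    _ ≤ ‖A‖ * (2 * ‖v‖) := by nlinarith [norm_nonneg v]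
  have := inv_mul_le_of_le_mul₀ (norm_nonneg A) (by positivity) hy'
  linarith

theorem ContinuousLinearEquiv.norm_le_two_mul_norm_symm_mul_of_norm_sub_le (e : E ≃L[𝕜] F)
    (hy : ‖y - e v‖ ≤ L / 2 * ‖v‖ ^ 2) (hv : L * ‖(e.symm : F →L[𝕜] E)‖ * ‖v‖ ≤ 1) :
    ‖v‖ ≤ 2 * ‖(e.symm : F →L[𝕜] E)‖ * ‖y‖ := by
  set M := ‖(e.symm : F →L[𝕜] E)‖
  have hM : 0 ≤ M := norm_nonneg _
  have hv' : ‖v‖ ≤ M * ‖y‖ + ‖v‖ / 2 := calc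
    ‖v‖ = ‖(e.symm : F →L[𝕜] E) (e v)‖ := by simp
    _ ≤ M * ‖e v‖ := (e.symm : F →L[𝕜] E).le_opNorm _
    _ ≤ M * (‖y‖ + L / 2 * ‖v‖ ^ 2) := by
      gcongr
      calc ‖e v‖ ≤ ‖y‖ + ‖e v - y‖ := norm_le_insert' _ _
        _ ≤ ‖y‖ + L / 2 * ‖v‖ ^ 2 := by rw [norm_sub_rev]; gcongr
    _ = M * ‖y‖ + L * M * ‖v‖ * ‖v‖ / 2 := by ring
    _ ≤ M * ‖y‖ + ‖v‖ / 2 := by gcongr; nlinarith [norm_nonneg v]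
  linarith

end PerturbedLinear

theorem two_sided_a_posteriori_bound_hilbert_general
    {X Y : Type*} [NormedAddCommGroup X] [InnerProductSpace ℝ X]
    [NormedAddCommGroup Y] [InnerProductSpace ℝ Y]
    (u : X) (R₀ : ℝ) (hR₀ : 0 < R₀) (F : X → Y) (DF : X → X →L[ℝ] Y)
    (L : ℝ) (hL : 0 < L)
    (hdiff : ∀ v ∈ Metric.ball u R₀, HasFDerivAt F (DF v) v)
    (hlip : ∀ v ∈ Metric.ball u R₀, ∀ w ∈ Metric.ball u R₀,
      ‖DF v - DF w‖ ≤ L * ‖v - w‖)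
    (hFu : F u = 0)
    (e : X ≃L[ℝ] Y) (he : (e : X →L[ℝ] Y) = DF u) :
    ∀ uhat : X, ‖uhat - u‖ < min R₀ (min (2 * ‖DF u‖ / L) (1 / (L * ‖(e.symm : Y →L[ℝ] X)‖))) →
      (1 / 2) * ‖DF u‖⁻¹ * ‖F uhat‖ ≤ ‖u - uhat‖ ∧
      ‖u - uhat‖ ≤ 2 * ‖(e.symm : Y →L[ℝ] X)‖ * ‖F uhat‖ := by
  intro uhat h
  simp only [lt_min_iff] at h
  obtain ⟨hR, hDF, hsymm⟩ := h
  have hu := Metric.mem_ball_self hR₀ (x := u)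
  have taylor : ‖F uhat - DF u (uhat - u)‖ ≤ L / 2 * ‖uhat - u‖ ^ 2 := by
    simpa [hFu] using (convex_ball u R₀).norm_image_sub_sub_fderiv_le_of_lipschitz hdiff
      (fun z hz => hlip z hz u hu) hu (by rwa [Metric.mem_ball, dist_eq_norm])
  have hLsymm : 0 < L * ‖(e.symm : Y →L[ℝ] X)‖ :=
    one_div_pos.1 ((norm_nonneg _).trans_lt hsymm)
  rw [norm_sub_rev u uhat]
  constructor
  · exact (DF u).half_mul_inv_norm_mul_norm_le_of_norm_sub_le taylor
      (by rw [lt_div_iff₀ hL] at hDF; linarith)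
  · refine e.norm_le_two_mul_norm_symm_mul_of_norm_sub_le (by rwa [← he] at taylor) ?_
    rw [lt_div_iff₀ hLsymm] at hsymm
    linarith

/-- Theorem 2 of the appendix (a posteriori error estimate of least-squares finite
element methods): for real Hilbert spaces `X`, `Y`, if `F u = 0`, `DF u` is a continuous
linear isomorphism `e : X ≃L[ℝ] Y`, and `DF` is Lipschitz with constant `L > 0` on
`B(u, R₀)`, then for every `uhat` with
`‖uhat - u‖ < min (R₀, 2‖DF u‖/L, 1/(L‖e.symm‖))`,
`(1/2) ‖DF u‖⁻¹ ‖F uhat‖ ≤ ‖u - uhat‖ ≤ 2 ‖e.symm‖ ‖F uhat‖`. -/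
theorem two_sided_a_posteriori_bound_hilbert
    {X Y : Type*} [NormedAddCommGroup X] [InnerProductSpace ℝ X] [CompleteSpace X]
    [NormedAddCommGroup Y] [InnerProductSpace ℝ Y] [CompleteSpace Y]
    (u : X) (R₀ : ℝ) (hR₀ : 0 < R₀) (F : X → Y) (DF : X → X →L[ℝ] Y)
    (L : ℝ) (hL : 0 < L)
    (hdiff : ∀ v ∈ Metric.ball u R₀, HasFDerivAt F (DF v) v)
    (hlip : ∀ v ∈ Metric.ball u R₀, ∀ w ∈ Metric.ball u R₀,
      ‖DF v - DF w‖ ≤ L * ‖v - w‖)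
    (hFu : F u = 0)
    (e : X ≃L[ℝ] Y) (he : (e : X →L[ℝ] Y) = DF u) :
    ∀ uhat : X, ‖uhat - u‖ < min R₀ (min (2 * ‖DF u‖ / L) (1 / (L * ‖(e.symm : Y →L[ℝ] X)‖))) →
      (1 / 2) * ‖DF u‖⁻¹ * ‖F uhat‖ ≤ ‖u - uhat‖ ∧
      ‖u - uhat‖ ≤ 2 * ‖(e.symm : Y →L[ℝ] X)‖ * ‖F uhat‖ :=
  two_sided_a_posteriori_bound_hilbert_general u R₀ hR₀ F DF L hL hdiff hlip hFu e he
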